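/- arXiv:2205.13592 — 2 statements merged into one kernel-verified Lean document; each statement's English description precedes it below -/
import Mathlib

section
/- Let f: ℤ² → ℤ be a slowly growing Riemann function and W = 𝔪f. Then W takes only values in {-1, 0, 1}. Moreover, with a = f(d): W(d) = 1 iff f(d-e₁) = f(d-e₂) = f(d-e₁-e₂) = a-1; and W(d) = -1 iff f(d-e₁) = f(d-e₂) = a = f(d-e₁-e₂)+1. -/
open scoped BigOperators

/-- degree of a divisor -/
def deg {n : ℕ} (d : Fin n → ℤ) : ℤ := ∑ i, d i

/-- initially zero: vanishes for all sufficiently small degree -/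
def InitiallyZero {n : ℕ} (f : (Fin n → ℤ) → ℤ) : Prop :=
  ∃ a : ℤ, ∀ d, deg d ≤ a → f d = 0

/-- indicator vector of a finite set of coordinates -/
def eI {n : ℕ} (I : Finset (Fin n)) : Fin n → ℤ := fun i => if i ∈ I then 1 else 0

/-- standard basis vector -/
def stdB {n : ℕ} (i : Fin n) : Fin n → ℤ := fun j => if j = i then 1 else 0

/-- the Möbius operator 𝔪 -/
def mob {n : ℕ} (f : (Fin n → ℤ) → ℤ) : (Fin n → ℤ) → ℤ :=
  fun d => ∑ I : Finset (Fin n), (-1) ^ I.card * f (d - eI I)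

/-- a modular function -/
def Modular {n : ℕ} (h : (Fin n → ℤ) → ℤ) : Prop := ∀ d, mob h d = 0

/-- L¹ distance (as a natural number) from `d` to the set `N` -/
noncomputable def distTo {n : ℕ} (N : Set (Fin n → ℤ)) (d : Fin n → ℤ) : ℕ :=
  sInf {k : ℕ | ∃ d' ∈ N, ∑ i, (d i - d' i).natAbs = k}

lemma mob2 (f : (Fin 2 → ℤ) → ℤ) (d : Fin 2 → ℤ) :
    mob f d = f d - f (d - stdB 0) - f (d - stdB 1) + f (d - stdB 0 - stdB 1) := by
  have huniv : (Finset.univ : Finset (Finset (Fin 2))) = {∅, {0}, {1}, {0, 1}} := by decide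
  have h0 : eI (∅ : Finset (Fin 2)) = 0 := by
    funext i; simp [eI]
  have h1 : eI ({0} : Finset (Fin 2)) = stdB 0 := by
    funext i; fin_cases i <;> simp [eI, stdB]
  have h2 : eI ({1} : Finset (Fin 2)) = stdB 1 := by
    funext i; fin_cases i <;> simp [eI, stdB]
  have h3 : eI ({0, 1} : Finset (Fin 2)) = stdB 0 + stdB 1 := by
    funext i; fin_cases i <;> simp [eI, stdB]
  rw [mob, huniv]
  rw [Finset.sum_insert (by decide), Finset.sum_insert (by decide),
    Finset.sum_insert (by decide), Finset.sum_singleton]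
  rw [h0, h1, h2, h3]
  have : d - (stdB 0 + stdB 1) = d - stdB 0 - stdB 1 := by
    funext i; simp [Pi.sub_apply]; ring
  rw [this]
  norm_num
  ring

theorem stmt13 (f : (Fin 2 → ℤ) → ℤ) (hf0 : InitiallyZero f) (C : ℤ)
    (hev : ∃ b : ℤ, ∀ d, b ≤ deg d → f d = deg d + C)
    (hslow : ∀ d (i : Fin 2), f d ≤ f (d + stdB i) ∧ f (d + stdB i) ≤ f d + 1) :
    ∀ d : Fin 2 → ℤ,
      mob f d ∈ ({-1, 0, 1} : Set ℤ) ∧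
      (mob f d = 1 ↔ f (d - stdB 0) = f d - 1 ∧ f (d - stdB 1) = f d - 1 ∧
        f (d - stdB 0 - stdB 1) = f d - 1) ∧
      (mob f d = -1 ↔ f (d - stdB 0) = f d ∧ f (d - stdB 1) = f d ∧
        f (d - stdB 0 - stdB 1) = f d - 1) := by

  intro d
  have key : ∀ e : Fin 2 → ℤ, ∀ i : Fin 2, f (e - stdB i) ≤ f e ∧ f e ≤ f (e - stdB i) + 1 := by
    intro e i
    have h := hslow (e - stdB i) i
    have : e - stdB i + stdB i = e := by funext j; simp
    rw [this] at h
    exact h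
  have m := mob2 f d
  have h1 := key d 0
  have h2 := key d 1
  have h3 := key (d - stdB 0) 1
  have h4 := key (d - stdB 1) 0
  have hcomm : d - stdB 1 - stdB 0 = d - stdB 0 - stdB 1 := by
    funext j; simp [Pi.sub_apply]; ring
  rw [hcomm] at h4
  refine ⟨?_, ?_, ?_⟩
  · simp only [Set.mem_insert_iff, Set.mem_singleton_iff]; omega
  · constructor <;> intro h <;> [omega; omega]
  · constructor <;> intro h <;> [omega; omega]
end

section
/- Let Kₙ be the complete graph and r_BN its Baker-Norine rank. For every d ∈ ℤ^n: r_BN(d) = -1 + |{ i ∈ {0,…,deg(d)} : ∑_{j=1}^{n-2} ((dⱼ - d_{n-1} + i) mod n) ≤ deg(d) - i }|, where mod n takes values in {0,…,n-1}. (In particular r_BN(d) = -1 when deg(d) < 0.) -/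
open scoped BigOperators

/-- equivalence modulo the image of the Laplacian of the complete graph Kₙ:
the Laplacian sends `x` to `fun i => n * x i - ∑ j, x j`. -/
def lapEquiv (n : ℕ) (d d' : Fin n → ℤ) : Prop :=
  ∃ x : Fin n → ℤ, ∀ i, d i - d' i = (n : ℤ) * x i - ∑ j, x j

/-- divisors of Kₙ not equivalent to an effective divisor -/
def NKn (n : ℕ) : Set (Fin n → ℤ) :=
  {d | ¬ ∃ d' : Fin n → ℤ, (∀ i, 0 ≤ d' i) ∧ lapEquiv n d d'}

/-- the Baker–Norine rank of the complete graph Kₙ -/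
noncomputable def rBN (n : ℕ) (d : Fin n → ℤ) : ℤ :=
  (distTo (NKn n) d : ℤ) - 1


/-!
A function `f : (Fin n → ℤ) → ℕ` is the L¹ distance to a down-closed set `N` as soon as it
vanishes exactly on `N`, drops by at most one when a chip is removed, and, when positive, drops
after removing some chip. On `Kₙ`, `d` is equivalent to an effective divisor iff
`∑ⱼ (dⱼ - c) mod n ≤ deg d` for some `c ∈ ℤ`; with `c = d_u - i` (`u = n - 2`, `w = n - 1`) this
says that `i` belongs to the set counted in the formula, `rankSet u w d`. Removing a chip from `d`
shifts that set (at `u`), loses only the unique tight index (at `w`), or loses only the unique index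
whose residue wraps around with no room to spare (elsewhere); when the set is nonempty, a chip at
`u` or at the vertex whose residue wraps just below its minimum strictly shrinks it.
-/

open Finset

lemma Int.emod_le_self_of_nonneg {x m : ℤ} (hx : 0 ≤ x) (hm : 0 < m) : x % m ≤ x := by
  have := Int.emod_add_mul_ediv x m
  have := Int.ediv_nonneg hx hm.le
  nlinarith

lemma Int.ModEq.le_of_lt_add {a b m : ℤ} (h : a ≡ b [ZMOD m]) (hlt : a < b + m) (hm : 0 < m) :
    a ≤ b := by
  obtain ⟨k, hk⟩ := h.dvd
  have : m * -1 < m * k := by linarith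
  nlinarith [lt_of_mul_lt_mul_left this hm.le]

lemma Int.sub_one_emod (x : ℤ) {m : ℤ} (hm : 0 < m) :
    (x - 1) % m = if x % m = 0 then m - 1 else x % m - 1 := by
  have hx : (x - 1) % m = (x % m - 1) % m := (Int.mod_modEq x m).symm.sub_right 1
  have := Int.emod_nonneg x hm.ne'
  have := Int.emod_lt_of_pos x hm
  split_ifs with h
  · rw [hx, h, Int.emod_eq_add_self_emod, Int.emod_eq_of_lt] <;> omega
  · rw [hx, Int.emod_eq_of_lt] <;> omega

namespace BakerNorine

variable {n : ℕ}

section Distance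

def l1Dist (d d' : Fin n → ℤ) : ℕ := ∑ i, (d i - d' i).natAbs

lemma sum_natAbs_stdB (v : Fin n) : ∑ i, (stdB v i).natAbs = 1 := by
  simp [stdB, apply_ite]

lemma l1Dist_le_l1Dist_sub_stdB_add_one (d d' : Fin n → ℤ) (v : Fin n) :
    l1Dist d d' ≤ l1Dist (d - stdB v) d' + 1 := by
  calc l1Dist d d' ≤ ∑ i, (((d - stdB v) i - d' i).natAbs + (stdB v i).natAbs) :=
        sum_le_sum fun i _ => by simp only [Pi.sub_apply]; omega
    _ = l1Dist (d - stdB v) d' + 1 := by rw [sum_add_distrib, sum_natAbs_stdB]; rfl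

lemma l1Dist_sub_stdB_add_one {d d' : Fin n → ℤ} {v : Fin n} (hv : d' v < d v) :
    l1Dist (d - stdB v) d' + 1 = l1Dist d d' := by
  rw [l1Dist, ← sum_natAbs_stdB v, ← sum_add_distrib]
  refine sum_congr rfl fun i _ => ?_
  simp only [Pi.sub_apply, stdB]
  split_ifs with h
  · subst h; omega
  · omega

variable {N : Set (Fin n → ℤ)} {f : (Fin n → ℤ) → ℕ}

lemma exists_mem_l1Dist_le_of_descent (hzero : ∀ d, f d = 0 → d ∈ N)
    (hdesc : ∀ d, f d ≠ 0 → ∃ v, f (d - stdB v) < f d) (d : Fin n → ℤ) :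
    ∃ d' ∈ N, l1Dist d d' ≤ f d := by
  induction hk : f d using Nat.strong_induction_on generalizing d with
  | _ k ih =>
    rcases eq_or_ne (f d) 0 with h0 | h0
    · exact ⟨d, hzero d h0, by simp [l1Dist]⟩
    · obtain ⟨v, hv⟩ := hdesc d h0
      obtain ⟨d', hd', hle⟩ := ih _ (hk ▸ hv) (d - stdB v) rfl
      exact ⟨d', hd', (l1Dist_le_l1Dist_sub_stdB_add_one d d' v).trans (by omega)⟩

lemma le_l1Dist_of_le_sub_stdB_add_one (hN : ∀ d d', d ≤ d' → d' ∈ N → f d = 0)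
    (hstep : ∀ d v, f d ≤ f (d - stdB v) + 1) {d' : Fin n → ℤ} (hd' : d' ∈ N)
    (d : Fin n → ℤ) : f d ≤ l1Dist d d' := by
  induction hk : l1Dist d d' using Nat.strong_induction_on generalizing d with
  | _ k ih =>
    by_cases hle : d ≤ d'
    · simp [hN d d' hle hd']
    · obtain ⟨v, hv⟩ : ∃ v, d' v < d v := by simpa [Pi.le_def] using hle
      have := l1Dist_sub_stdB_add_one hv
      have := ih _ (by omega) (d - stdB v) rfl
      have := hstep d v
      omega

theorem distTo_eq_of_descent (hN : ∀ d d', d ≤ d' → d' ∈ N → d ∈ N) (hf : ∀ d, f d = 0 ↔ d ∈ N)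
    (hstep : ∀ d v, f d ≤ f (d - stdB v) + 1) (hdesc : ∀ d, f d ≠ 0 → ∃ v, f (d - stdB v) < f d)
    (d : Fin n → ℤ) : distTo N d = f d := by
  obtain ⟨d₀, hd₀, hle⟩ := exists_mem_l1Dist_le_of_descent (fun d => (hf d).1) hdesc d
  have hmem : l1Dist d d₀ ∈ {k | ∃ d' ∈ N, ∑ i, (d i - d' i).natAbs = k} := ⟨d₀, hd₀, rfl⟩
  refine le_antisymm ((Nat.sInf_le hmem).trans hle) (le_csInf ⟨_, hmem⟩ ?_)
  rintro k ⟨d', hd', rfl⟩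
  exact le_l1Dist_of_le_sub_stdB_add_one (fun d d' h h' => (hf d).2 (hN d d' h h')) hstep hd' d

end Distance

section Effective

lemma mem_NKn_of_le {d d' : Fin n → ℤ} (hle : d ≤ d') (h : d' ∈ NKn n) : d ∈ NKn n := by
  rintro ⟨e, he, x, hx⟩
  refine h ⟨e + (d' - d), fun i => ?_, x, fun i => ?_⟩
  · simp only [Pi.add_apply, Pi.sub_apply]; linarith [he i, hle i]
  · simp only [Pi.add_apply, Pi.sub_apply]; linarith [hx i]

lemma deg_sub (d d' : Fin n → ℤ) : deg (d - d') = deg d - deg d' := sum_sub_distrib ..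

lemma deg_eq_of_lapEquiv {d d' : Fin n → ℤ} (h : lapEquiv n d d') : deg d = deg d' := by
  obtain ⟨x, hx⟩ := h
  have : deg (d - d') = 0 := by
    simp only [deg, Pi.sub_apply, hx, sum_sub_distrib, sum_const, card_univ, Fintype.card_fin,
      ← mul_sum, nsmul_eq_mul, sub_self]
  rw [deg_sub] at this
  linarith

lemma lapEquiv_of_eq_mul_add {d d' : Fin n → ℤ} (hdeg : deg d = deg d') (hn : 0 < n)
    (y : Fin n → ℤ) (c : ℤ) (h : ∀ i, d i - d' i = n * y i + c) : lapEquiv n d d' := by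
  have hsum : (n : ℤ) * (∑ j, y j + c) = 0 := by
    have := congrArg (fun e => ∑ i, e i) (funext h)
    simp only [sum_sub_distrib, sum_add_distrib, sum_const, card_univ, Fintype.card_fin,
      ← mul_sum, nsmul_eq_mul] at this
    unfold deg at hdeg
    linarith
  have hc : c = -∑ j, y j := by
    rcases mul_eq_zero.1 hsum with h0 | h0
    · omega
    · linarith
  exact ⟨y, fun i => by rw [h i, hc]; ring⟩

lemma sum_sub_emod_modEq_deg (d : Fin n → ℤ) (c : ℤ) : ∑ j, (d j - c) % n ≡ deg d [ZMOD n] :=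
  calc ∑ j, (d j - c) % n ≡ ∑ j, (d j - c) [ZMOD n] := Int.ModEq.sum fun j _ => Int.mod_modEq _ _
    _ = deg d + n * -c := by simp [deg, sum_sub_distrib]; ring
    _ ≡ deg d [ZMOD n] := Int.add_mul_emod_self_left _ _ _

lemma sum_stdB (v : Fin n) : ∑ i, stdB v i = 1 := by simp [stdB]

-- `c` is the constant `-∑ x` of a Laplacian image `n • x - (∑ x) • 1`.
theorem not_mem_NKn_iff (hn : 0 < n) (d : Fin n → ℤ) :
    d ∉ NKn n ↔ ∃ c : ℤ, ∑ j, (d j - c) % n ≤ deg d := by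
  have hn' : (0 : ℤ) < n := by exact_mod_cast hn
  simp only [NKn, Set.mem_ofPred_eq, not_not]
  constructor
  · rintro ⟨d', hd', x, hx⟩
    refine ⟨-∑ j, x j, ?_⟩
    calc ∑ j, (d j - -∑ j, x j) % n = ∑ j, d' j % n := sum_congr rfl fun j _ => by
            rw [show d j - -∑ j, x j = d' j + n * x j by linarith [hx j],
              Int.add_mul_emod_self_left]
      _ ≤ deg d' := sum_le_sum fun j _ => Int.emod_le_self_of_nonneg (hd' j) hn'
      _ = deg d := (deg_eq_of_lapEquiv ⟨x, hx⟩).symm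
  · rintro ⟨c, hc⟩
    obtain ⟨t, ht⟩ := (sum_sub_emod_modEq_deg d c).dvd
    have ht0 : 0 ≤ t := by nlinarith
    -- The residues, plus the missing degree `n * t` placed on vertex `0`.
    let d' : Fin n → ℤ := fun j => (d j - c) % n + n * t * stdB ⟨0, hn⟩ j
    refine ⟨d', fun j => ?_, lapEquiv_of_eq_mul_add ?_ hn
      (fun j => (d j - c) / n - t * stdB ⟨0, hn⟩ j) c fun j => ?_⟩
    · have := Int.emod_nonneg (d j - c) hn'.ne'
      have : 0 ≤ stdB ⟨0, hn⟩ j := by unfold stdB; split_ifs <;> norm_num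
      positivity
    · simp only [deg, d', sum_add_distrib, ← mul_sum, sum_stdB]
      linarith [show deg d = ∑ j, d j from rfl]
    · have := Int.emod_add_mul_ediv (d j - c) n
      simp only [d']
      linarith

end Effective

section ResidueSum

variable (u w : Fin n)

def residueSum (d : Fin n → ℤ) (i : ℤ) : ℤ :=
  ∑ j ∈ ({u, w}ᶜ : Finset (Fin n)), (d j - d u + i) % n

def rankSet (d : Fin n → ℤ) : Finset ℕ :=
  (range (deg d + 1).toNat).filter fun i : ℕ => residueSum u w d i ≤ deg d - i

variable {u w} {d : Fin n → ℤ}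

lemma natCast_pos_of_fin (u : Fin n) : (0 : ℤ) < n := by exact_mod_cast u.pos

lemma residueSum_nonneg (i : ℤ) : 0 ≤ residueSum u w d i :=
  sum_nonneg fun _ _ => Int.emod_nonneg _ (natCast_pos_of_fin u).ne'

lemma mem_rankSet {i : ℕ} : i ∈ rankSet u w d ↔ residueSum u w d i ≤ deg d - i := by
  rw [rankSet, mem_filter, mem_range, and_iff_right_iff_imp]
  have := residueSum_nonneg (u := u) (w := w) (d := d) i
  omega

lemma residueSum_congr {i i' : ℤ} (h : i ≡ i' [ZMOD n]) :
    residueSum u w d i = residueSum u w d i' :=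
  sum_congr rfl fun _ _ => h.add_left _

lemma residueSum_eq_sum_emod {i c : ℤ} (h : d u - i ≡ c [ZMOD n]) :
    residueSum u w d i = ∑ j ∈ ({u, w}ᶜ : Finset (Fin n)), (d j - c) % n :=
  sum_congr rfl fun j _ => by
    rw [show d j - d u + i = d j - (d u - i) by ring]
    exact h.sub_left _

lemma card_compl_pair (huw : u ≠ w) : (#({u, w}ᶜ : Finset (Fin n)) : ℤ) = n - 2 := by
  have := card_compl_add_card ({u, w} : Finset (Fin n))
  rw [card_pair huw, Fintype.card_fin] at this
  omega

lemma residueSum_add_two_mul_modEq (huw : u ≠ w) (i : ℤ) :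
    residueSum u w d i + 2 * i ≡ ∑ j ∈ ({u, w}ᶜ : Finset (Fin n)), (d j - d u) [ZMOD n] :=
  calc residueSum u w d i + 2 * i
      ≡ ∑ j ∈ ({u, w}ᶜ : Finset (Fin n)), (d j - d u + i) + 2 * i [ZMOD n] :=
        (Int.ModEq.sum fun _ _ => Int.mod_modEq _ _).add_right _
    _ = ∑ j ∈ ({u, w}ᶜ : Finset (Fin n)), (d j - d u) + n * i := by
        rw [sum_add_distrib, sum_const, nsmul_eq_mul, card_compl_pair huw]; ring
    _ ≡ _ [ZMOD n] := Int.add_mul_emod_self_left _ _ _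

lemma eq_of_modEq_of_window {i i' : ℤ} (h : i ≡ i' [ZMOD n])
    (hi : deg d < residueSum u w d i + i + n) (hi' : residueSum u w d i + i ≤ deg d)
    (hj : deg d < residueSum u w d i' + i' + n) (hj' : residueSum u w d i' + i' ≤ deg d) :
    i = i' := by
  rw [← residueSum_congr h] at hj hj'
  obtain ⟨k, hk⟩ := h.dvd
  have hn := natCast_pos_of_fin u
  have h1 : (n : ℤ) * k < n * 1 := by linarith
  have h2 : (n : ℤ) * -1 < n * k := by linarith
  have := lt_of_mul_lt_mul_left h1 hn.le
  have := lt_of_mul_lt_mul_left h2 hn.le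
  have : k = 0 := by omega
  subst this
  linarith

lemma deg_sub_stdB (d : Fin n → ℤ) (v : Fin n) : deg (d - stdB v) = deg d - 1 := by
  rw [deg_sub, deg, deg, sum_stdB]

lemma mem_compl_pair {j : Fin n} : j ∈ ({u, w}ᶜ : Finset (Fin n)) ↔ j ≠ u ∧ j ≠ w := by
  simp

lemma residueSum_sub_stdB_left (i : ℤ) :
    residueSum u w (d - stdB u) i = residueSum u w d (i + 1) :=
  sum_congr rfl fun j hj => by
    simp only [Pi.sub_apply, stdB, if_neg (mem_compl_pair.1 hj).1, if_true]
    ring_nf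

lemma residueSum_sub_stdB_right (huw : u ≠ w) (i : ℤ) :
    residueSum u w (d - stdB w) i = residueSum u w d i :=
  sum_congr rfl fun j hj => by
    simp only [Pi.sub_apply, stdB, if_neg (mem_compl_pair.1 hj).2, if_neg huw, sub_zero]

lemma residueSum_sub_stdB_of_mem {j : Fin n} (hj : j ∈ ({u, w}ᶜ : Finset (Fin n))) (i : ℤ) :
    residueSum u w (d - stdB j) i =
      residueSum u w d i - 1 + if (d j - d u + i) % n = 0 then (n : ℤ) else 0 := by
  have hju := (mem_compl_pair.1 hj).1
  have hterm : (d - stdB j) j - (d - stdB j) u + i = (d j - d u + i) - 1 := by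
    simp only [Pi.sub_apply, stdB, if_pos, if_neg hju.symm]; ring
  unfold residueSum
  rw [← add_sum_erase _ _ hj, ← add_sum_erase _ _ hj, hterm,
    Int.sub_one_emod _ (natCast_pos_of_fin u)]
  have hrest : ∑ k ∈ ({u, w}ᶜ : Finset (Fin n)).erase j, ((d - stdB j) k - (d - stdB j) u + i) % n
      = ∑ k ∈ ({u, w}ᶜ : Finset (Fin n)).erase j, (d k - d u + i) % n :=
    sum_congr rfl fun k hk => by
      simp only [Pi.sub_apply, stdB, if_neg (ne_of_mem_erase hk), if_neg hju.symm, sub_zero]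
  rw [hrest]
  split_ifs with h <;> linarith

lemma residueSum_sub_one_le {i : ℤ}
    (h : ∀ j ∈ ({u, w}ᶜ : Finset (Fin n)), (d j - d u + i) % n ≠ 0) :
    residueSum u w d (i - 1) ≤ residueSum u w d i :=
  sum_le_sum fun j hj => by
    rw [show d j - d u + (i - 1) = d j - d u + i - 1 by ring,
      Int.sub_one_emod _ (natCast_pos_of_fin u), if_neg (h j hj)]
    linarith

lemma mem_rankSet_sub_stdB_left {i : ℕ} :
    i ∈ rankSet u w (d - stdB u) ↔ i + 1 ∈ rankSet u w d := by
  rw [mem_rankSet, mem_rankSet, residueSum_sub_stdB_left, deg_sub_stdB]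
  push_cast
  constructor <;> intro h <;> linarith

lemma mem_rankSet_sub_stdB_right (huw : u ≠ w) {i : ℕ} :
    i ∈ rankSet u w (d - stdB w) ↔ residueSum u w d i < deg d - i := by
  rw [mem_rankSet, residueSum_sub_stdB_right huw, deg_sub_stdB]
  omega

lemma mem_rankSet_sub_stdB_of_mem {j : Fin n} (hj : j ∈ ({u, w}ᶜ : Finset (Fin n))) {i : ℕ} :
    i ∈ rankSet u w (d - stdB j) ↔
      i ∈ rankSet u w d ∧ ((d j - d u + i) % n = 0 → residueSum u w d i + n ≤ deg d - i) := by
  rw [mem_rankSet, mem_rankSet, residueSum_sub_stdB_of_mem hj, deg_sub_stdB]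
  have := natCast_pos_of_fin u
  split_ifs with h
  · simp only [h, forall_const]; omega
  · simp only [h, false_implies, and_true]; omega

lemma sum_eq_sum_compl_pair_add (huw : u ≠ w) (g : Fin n → ℤ) :
    ∑ j, g j = ∑ j ∈ ({u, w}ᶜ : Finset (Fin n)), g j + (g u + g w) := by
  rw [← sum_compl_add_sum {u, w}, sum_pair huw]

theorem not_mem_NKn_iff_rankSet_nonempty (huw : u ≠ w) :
    d ∉ NKn n ↔ (rankSet u w d).Nonempty := by
  have hn := natCast_pos_of_fin u
  rw [not_mem_NKn_iff u.pos]
  constructor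
  · rintro ⟨c, hc⟩
    obtain ⟨i, hi⟩ : ∃ i : ℕ, (i : ℤ) = (d u - c) % n :=
      ⟨_, Int.toNat_of_nonneg (Int.emod_nonneg _ hn.ne')⟩
    have hF : residueSum u w d i = ∑ j ∈ ({u, w}ᶜ : Finset (Fin n)), (d j - c) % n :=
      residueSum_eq_sum_emod (by rw [hi]; simpa using ((Int.mod_modEq (d u - c) n).sub_left (d u)))
    rw [sum_eq_sum_compl_pair_add huw] at hc
    have := Int.emod_nonneg (d w - c) hn.ne'
    exact ⟨i, mem_rankSet.2 (by omega)⟩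
  · rintro ⟨i, hi⟩
    refine ⟨d u - i, (sum_sub_emod_modEq_deg d _).le_of_lt_add ?_ hn⟩
    have hF := residueSum_eq_sum_emod (u := u) (w := w) (d := d) (Int.ModEq.refl (d u - i))
    rw [sum_eq_sum_compl_pair_add huw, ← hF, sub_sub_cancel]
    have := Int.emod_le_self_of_nonneg (Int.natCast_nonneg i) hn
    have := Int.emod_lt_of_pos (d w - (d u - i)) hn
    have := mem_rankSet.1 hi
    omega

lemma card_le_card_add_one_of_sdiff {s t : Finset ℕ} (h : ∀ a ∈ s \ t, ∀ b ∈ s \ t, a = b) :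
    #s ≤ #t + 1 := by
  have := card_le_card_sdiff_add_card (s := s) (t := t)
  have := card_le_one.2 h
  omega

theorem card_rankSet_le_card_rankSet_sub_stdB_add_one (huw : u ≠ w) (d : Fin n → ℤ) (v : Fin n) :
    #(rankSet u w d) ≤ #(rankSet u w (d - stdB v)) + 1 := by
  have hn := natCast_pos_of_fin u
  obtain rfl | rfl | hv : v = u ∨ v = w ∨ v ∈ ({u, w}ᶜ : Finset (Fin n)) := by
    rw [mem_compl_pair]; tauto
  · calc #(rankSet v w d) ≤ #(insert 0 ((rankSet v w (d - stdB v)).image (· + 1))) := by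
          refine card_le_card fun i hi => ?_
          rcases i with _ | i
          · exact mem_insert_self ..
          · exact mem_insert_of_mem (mem_image_of_mem _ (mem_rankSet_sub_stdB_left.2 hi))
      _ ≤ #(rankSet v w (d - stdB v)) + 1 := (card_insert_le ..).trans (by grw [card_image_le])
  · refine card_le_card_add_one_of_sdiff fun i hi i' hi' => ?_
    simp only [mem_sdiff, mem_rankSet_sub_stdB_right huw, mem_rankSet, not_lt] at hi hi'
    have htight := ((residueSum_add_two_mul_modEq huw (d := d) i).trans
      (residueSum_add_two_mul_modEq huw i').symm)
    rw [show residueSum u v d i = deg d - i by omega,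
      show residueSum u v d i' = deg d - i' by omega] at htight
    rw [show deg d - i + 2 * i = deg d + i by ring, show deg d - i' + 2 * i' = deg d + i' by ring]
      at htight
    exact_mod_cast eq_of_modEq_of_window (u := u) (w := v) (d := d) (htight.add_left_cancel' _)
      (by omega) (by omega) (by omega) (by omega)
  · refine card_le_card_add_one_of_sdiff fun i hi i' hi' => ?_
    simp only [mem_sdiff, mem_rankSet_sub_stdB_of_mem hv, not_and, Classical.not_imp, not_le]
      at hi hi'
    obtain ⟨hi0, hiw⟩ := hi.2 hi.1
    obtain ⟨hi'0, hi'w⟩ := hi'.2 hi'.1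
    have hii' : (i : ℤ) ≡ i' [ZMOD n] :=
      Int.ModEq.add_left_cancel' (d v - d u) (hi0.trans hi'0.symm)
    have := mem_rankSet.1 hi.1
    have := mem_rankSet.1 hi'.1
    exact_mod_cast eq_of_modEq_of_window (u := u) (w := w) (d := d) hii'
      (by omega) (by omega) (by omega) (by omega)

theorem exists_card_rankSet_sub_stdB_lt (hS : (rankSet u w d).Nonempty) :
    ∃ v, #(rankSet u w (d - stdB v)) < #(rankSet u w d) := by
  by_cases h0 : 0 ∈ rankSet u w d
  · refine ⟨u, ?_⟩
    calc #(rankSet u w (d - stdB u)) = #((rankSet u w (d - stdB u)).image (· + 1)) :=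
          (card_image_of_injective _ (add_left_injective 1)).symm
      _ ≤ #((rankSet u w d).erase 0) := card_le_card fun i hi => by
          obtain ⟨k, hk, rfl⟩ := mem_image.1 hi
          exact mem_erase.2 ⟨by omega, mem_rankSet_sub_stdB_left.1 hk⟩
      _ < #(rankSet u w d) := card_erase_lt_of_mem h0
  · set i₀ := (rankSet u w d).min' hS
    have hi₀ : i₀ ∈ rankSet u w d := min'_mem _ _
    have hpos : 0 < i₀ := Nat.pos_of_ne_zero fun h => h0 (h ▸ hi₀)
    -- `i₀ - 1 ∉ rankSet u w d` forces some residue to wrap around between `i₀ - 1` and `i₀`.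
    obtain ⟨j, hj, hj0⟩ : ∃ j ∈ ({u, w}ᶜ : Finset (Fin n)), (d j - d u + i₀) % n = 0 := by
      by_contra! h
      have hle := residueSum_sub_one_le h
      have hprev : i₀ - 1 ∈ rankSet u w d := by
        rw [mem_rankSet]; push_cast [hpos]; linarith [mem_rankSet.1 hi₀]
      have := min'_le _ _ hprev
      omega
    set R := (rankSet u w d).filter fun i : ℕ => (d j - d u + i) % n = 0
    have hR : R.Nonempty := ⟨i₀, mem_filter.2 ⟨hi₀, hj0⟩⟩
    obtain ⟨hmaxS, hmax0⟩ := mem_filter.1 (R.max'_mem hR)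
    have hsub : rankSet u w (d - stdB j) ⊆ rankSet u w d := fun i hi =>
      ((mem_rankSet_sub_stdB_of_mem hj).1 hi).1
    refine ⟨j, card_lt_card ((ssubset_iff_of_subset hsub).2 ⟨R.max' hR, hmaxS, fun hmax => ?_⟩)⟩
    -- Otherwise `R.max' hR + n` would be a larger element of `R`.
    have hroom := ((mem_rankSet_sub_stdB_of_mem hj).1 hmax).2 hmax0
    have hnext : R.max' hR + n ∈ R := by
      refine mem_filter.2 ⟨mem_rankSet.2 ?_, ?_⟩
      · push_cast
        rw [residueSum_congr (Int.add_modEq_right ..)]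
        linarith
      · push_cast
        rwa [← add_assoc, Int.add_emod_right]
    have := R.le_max' _ hnext
    have := u.pos
    omega

end ResidueSum

end BakerNorine

open BakerNorine

theorem stmt19 {n : ℕ} (hn : 2 ≤ n) (d : Fin n → ℤ) :
    rBN n d = -1 +
      (((Finset.range (deg d + 1).toNat).filter (fun i : ℕ =>
        (∑ j ∈ Finset.univ.filter (fun j : Fin n => (j : ℕ) < n - 2),
          ((d j - d ⟨n - 2, by omega⟩ + (i : ℤ)) % n)) ≤ deg d - (i : ℤ))).card : ℤ) := by
  set u : Fin n := ⟨n - 2, by omega⟩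
  set w : Fin n := ⟨n - 1, by omega⟩
  have huw : u ≠ w := by simp [u, w, Fin.ext_iff]; omega
  have hcompl : univ.filter (fun j : Fin n => (j : ℕ) < n - 2) = {u, w}ᶜ := by
    ext j; simp [u, w, Fin.ext_iff]; omega
  have hdist : distTo (NKn n) d = #(rankSet u w d) :=
    distTo_eq_of_descent (fun _ _ => mem_NKn_of_le)
      (fun d => by rw [card_eq_zero, ← not_nonempty_iff_eq_empty,
        ← not_mem_NKn_iff_rankSet_nonempty huw, not_not])
      (card_rankSet_le_card_rankSet_sub_stdB_add_one huw)
      (fun d h => exists_card_rankSet_sub_stdB_lt (card_ne_zero.1 h)) d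
  rw [rBN, hdist, sub_eq_neg_add, rankSet]
  simp only [residueSum, hcompl]
  rfl
end
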